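/- arXiv:2002.01026 — 4 statements merged into one kernel-verified Lean document; each statement's English description precedes it below -/
import Mathlib

section
/- Let ρ be a critical radius function on ℝ^d with constants B₀, k₀ > 1 and let β be the consolidated constant. There exists a constant A₀ > 1, depending only on B₀ and k₀, such that for every x ∈ ℝ^d: if 0 < r ≤ β then the Agmon ball B_ρ(x,r) is contained in the Euclidean ball B(x, A₀ r ρ(x)); and if r > β then B_ρ(x,r) ⊆ B(x, ((rβ)^{k₀+1} − 1) ρ(x)). -/
open MeasureTheory Metric Set

noncomputable section

/-- A critical radius function with constants `B₀, k₀`. -/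
def IsCRF {d : ℕ} (ρ : EuclideanSpace ℝ (Fin d) → ℝ) (B₀ k₀ : ℝ) : Prop :=
  (∀ x, 0 < ρ x) ∧ ∀ x y : EuclideanSpace ℝ (Fin d),
    B₀⁻¹ * ρ x * (1 + dist x y / ρ x) ^ (-k₀) ≤ ρ y ∧
    ρ y ≤ B₀ * ρ x * (1 + dist x y / ρ x) ^ (k₀ / (k₀ + 1))

/-- The Agmon distance associated to `ρ`. -/
def agmonDist {d : ℕ} (ρ : EuclideanSpace ℝ (Fin d) → ℝ)
    (x y : EuclideanSpace ℝ (Fin d)) : ℝ :=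
  sInf { L : ℝ | ∃ γ : ℝ → EuclideanSpace ℝ (Fin d), ContDiff ℝ 1 γ ∧ γ 0 = x ∧ γ 1 = y ∧
    L = ∫ t in (0:ℝ)..1, (ρ (γ t))⁻¹ * ‖deriv γ t‖ }

/-- The Agmon ball `B_ρ(x,r)`. -/
def agmonBall {d : ℕ} (ρ : EuclideanSpace ℝ (Fin d) → ℝ)
    (x : EuclideanSpace ℝ (Fin d)) (r : ℝ) : Set (EuclideanSpace ℝ (Fin d)) :=
  { y | agmonDist ρ x y < r }

/-!
Inside the doubled Euclidean ball `dist x y ≤ 2ρ(x)` the local comparison gives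
`|x - y| / ρ(x) ≤ D₀ d_ρ(x,y)`; outside `|x - y| ≥ ρ(x)` the global lower bound gives
`1 + |x - y| / ρ(x) ≤ (D₁ d_ρ(x,y))^(k₀+1)`. For `r ≤ β` the latter is at most
`(β r)^(k₀+1) ≤ β^(2k₀+1) r`, which yields `A₀ = β^(2k₀+1)`.
-/

open Metric

theorem rpow_add_one_mul_le {β r k : ℝ} (hk : 0 ≤ k) (hr : 0 < r) (hrβ : r ≤ β) :
    (β * r) ^ (k + 1) ≤ β ^ (2 * k + 1) * r := by
  have hβ : 0 < β := hr.trans_le hrβ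
  calc (β * r) ^ (k + 1) = β ^ (k + 1) * r ^ k * r := by
        rw [Real.mul_rpow hβ.le hr.le, Real.rpow_add_one hr.ne', mul_assoc]
    _ ≤ β ^ (k + 1) * β ^ k * r := by gcongr
    _ = β ^ (2 * k + 1) * r := by
        rw [← Real.rpow_add hβ]; ring_nf

section AgmonComparison

variable {d : ℕ} {ρ : EuclideanSpace ℝ (Fin d) → ℝ} {x y : EuclideanSpace ℝ (Fin d)} {r : ℝ}

theorem dist_lt_of_agmonDist_lt_of_local_bound {D₀ : ℝ} (hD₀ : 0 < D₀) (hρx : 0 < ρ x)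
    (hloc : D₀⁻¹ * (dist x y / ρ x) ≤ agmonDist ρ x y) (hy : agmonDist ρ x y < r) :
    dist x y < D₀ * r * ρ x := by
  rw [inv_mul_le_iff₀ hD₀, div_le_iff₀ hρx] at hloc
  exact hloc.trans_lt (by gcongr)

theorem dist_lt_of_agmonDist_lt_of_global_bound {D₁ p : ℝ} (hD₁ : 0 < D₁) (hp : 0 < p)
    (hρx : 0 < ρ x) (hlow : D₁⁻¹ * (1 + dist x y / ρ x) ^ p⁻¹ ≤ agmonDist ρ x y)
    (hy : agmonDist ρ x y < r) :
    dist x y < ((D₁ * r) ^ p - 1) * ρ x := by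
  have hs : 0 ≤ 1 + dist x y / ρ x := by positivity
  rw [inv_mul_le_iff₀ hD₁] at hlow
  have hroot : (1 + dist x y / ρ x) ^ p⁻¹ < D₁ * r := hlow.trans_lt (by gcongr)
  have hpow := (Real.rpow_inv_lt_iff_of_pos hs
    ((Real.rpow_nonneg hs _).trans_lt hroot).le hp).1 hroot
  rwa [← lt_sub_iff_add_lt', div_lt_iff₀ hρx] at hpow

end AgmonComparison

theorem stmt3_general {d : ℕ} (ρ : EuclideanSpace ℝ (Fin d) → ℝ) (B₀ k₀ D₀ D₁ β : ℝ)
    (hk₀ : 1 < k₀) (hρ : IsCRF ρ B₀ k₀)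
    (hD₀ : 1 < D₀)
    (hD₀loc : ∀ x y : EuclideanSpace ℝ (Fin d), dist x y ≤ 2 * ρ x →
      D₀⁻¹ * (dist x y / ρ x) ≤ agmonDist ρ x y ∧ agmonDist ρ x y ≤ D₀ * (dist x y / ρ x))
    (hD₁ : 1 < D₁)
    (hD₁low : ∀ x y : EuclideanSpace ℝ (Fin d), ρ x ≤ dist x y →
      D₁⁻¹ * (1 + dist x y / ρ x) ^ (k₀ + 1)⁻¹ ≤ agmonDist ρ x y)
    (hβ : max (max B₀ D₀) (max D₁ 2) ≤ β) :
    ∃ A₀ : ℝ, 1 < A₀ ∧ ∀ x : EuclideanSpace ℝ (Fin d),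
      (∀ r : ℝ, 0 < r → r ≤ β → agmonBall ρ x r ⊆ ball x (A₀ * r * ρ x)) ∧
      (∀ r : ℝ, β < r → agmonBall ρ x r ⊆ ball x (((r * β) ^ (k₀ + 1) - 1) * ρ x)) := by
  obtain ⟨hρpos, -⟩ := hρ
  simp only [max_le_iff] at hβ
  obtain ⟨⟨-, hD₀β⟩, hD₁β, h2β⟩ := hβ
  have hp : 0 < k₀ + 1 := by linarith
  have hβA : β ≤ β ^ (2 * k₀ + 1) := Real.self_le_rpow_of_one_le (by linarith) (by linarith)
  have hD₁_le : ∀ r, 0 < r → (D₁ * r) ^ (k₀ + 1) ≤ (r * β) ^ (k₀ + 1) := fun r hr =>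
    Real.rpow_le_rpow (by positivity) (by nlinarith) hp.le
  refine ⟨β ^ (2 * k₀ + 1), hβA.trans_lt' (by linarith),
    fun x => ⟨fun r hr hrβ y hy => ?_, fun r hβr y hy => ?_⟩⟩ <;>
    have hρx := hρpos x <;> rw [mem_ball, dist_comm]
  · by_cases hnear : dist x y ≤ 2 * ρ x
    · calc dist x y < D₀ * r * ρ x :=
            dist_lt_of_agmonDist_lt_of_local_bound (by linarith) hρx (hD₀loc x y hnear).1 hy
        _ ≤ β ^ (2 * k₀ + 1) * r * ρ x := by gcongr; linarith
    · calc dist x y < ((D₁ * r) ^ (k₀ + 1) - 1) * ρ x :=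
            dist_lt_of_agmonDist_lt_of_global_bound (by linarith) hp hρx
              (hD₁low x y (by linarith)) hy
        _ ≤ (r * β) ^ (k₀ + 1) * ρ x := by have := hD₁_le r hr; gcongr; linarith
        _ ≤ β ^ (2 * k₀ + 1) * r * ρ x := by
            rw [mul_comm r]; gcongr; exact rpow_add_one_mul_le (by linarith) hr hrβ
  · have hrβ : 1 ≤ r * β := by nlinarith
    by_cases hnear : dist x y < ρ x
    · have : r * β ≤ (r * β) ^ (k₀ + 1) := Real.self_le_rpow_of_one_le hrβ (by linarith)
      calc dist x y < 1 * ρ x := by rwa [one_mul]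
        _ ≤ ((r * β) ^ (k₀ + 1) - 1) * ρ x := by gcongr; nlinarith
    · calc dist x y < ((D₁ * r) ^ (k₀ + 1) - 1) * ρ x :=
            dist_lt_of_agmonDist_lt_of_global_bound (by linarith) hp hρx
              (hD₁low x y (not_lt.1 hnear)) hy
        _ ≤ ((r * β) ^ (k₀ + 1) - 1) * ρ x := by
            have := hD₁_le r (by linarith); gcongr

theorem stmt3 {d : ℕ} (ρ : EuclideanSpace ℝ (Fin d) → ℝ) (B₀ k₀ D₀ D₁ β : ℝ)
    (hB₀ : 1 < B₀) (hk₀ : 1 < k₀) (hρ : IsCRF ρ B₀ k₀)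
    (hD₀ : 1 < D₀)
    (hD₀loc : ∀ x y : EuclideanSpace ℝ (Fin d), dist x y ≤ 2 * ρ x →
      D₀⁻¹ * (dist x y / ρ x) ≤ agmonDist ρ x y ∧ agmonDist ρ x y ≤ D₀ * (dist x y / ρ x))
    (hD₁ : 1 < D₁)
    (hD₁up : ∀ x y : EuclideanSpace ℝ (Fin d),
      agmonDist ρ x y ≤ D₁ * (1 + dist x y / ρ x) ^ (k₀ + 1))
    (hD₁low : ∀ x y : EuclideanSpace ℝ (Fin d), ρ x ≤ dist x y →
      D₁⁻¹ * (1 + dist x y / ρ x) ^ (k₀ + 1)⁻¹ ≤ agmonDist ρ x y)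
    (hβ : max (max B₀ D₀) (max D₁ 2) ≤ β) :
    ∃ A₀ : ℝ, 1 < A₀ ∧ ∀ x : EuclideanSpace ℝ (Fin d),
      (∀ r : ℝ, 0 < r → r ≤ β → agmonBall ρ x r ⊆ ball x (A₀ * r * ρ x)) ∧
      (∀ r : ℝ, β < r → agmonBall ρ x r ⊆ ball x (((r * β) ^ (k₀ + 1) - 1) * ρ x)) :=
  stmt3_general ρ B₀ k₀ D₀ D₁ β hk₀ hρ hD₀ hD₀loc hD₁ hD₁low hβ
end
end

section
/- Let ρ be a critical radius function on ℝ^d with constant k₀ and associated Agmon balls B_ρ(x,r). There exists a constant C > 0 such that for all x ∈ ℝ^d and r > 0, the Lebesgue measure satisfies |B_ρ(x, 2r)| ≤ C (1 + r)^{(k₀+1)d} |B_ρ(x, r)|. -/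
/-!
Along a `C¹` path `γ` starting at `x`, the upper bound in the definition of a critical radius
function gives `ρ(γ t)⁻¹ ≥ (B₀ ρ(x))⁻¹ (1 + |γ t - x| / ρ(x)) ^ (-k₀/(k₀+1))`. The right-hand side
is the derivative of a radial function, so integrating along `γ` yields
`(1 + |x - y| / ρ(x)) ^ (1/(k₀+1)) - 1 ≤ B₀ / (k₀ + 1) · d_ρ(x, y)`: the Agmon ball `B_ρ(x, 2r)`
lies in a Euclidean ball of radius `((1 + 2 B₀ r / (k₀+1)) ^ (k₀+1) - 1) ρ(x)`.
Conversely, the lower bound on `ρ` over `B(x, ρ(x))`, applied along straight segments, gives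
`B(x, s ρ(x)) ⊆ B_ρ(x, B₀ 2^k₀ s)` for `s ≤ 1`. With `s = r / (B₀ 2^k₀ (1 + r))` the two
Euclidean balls have comparable volumes, up to the factor `C (1 + r) ^ ((k₀+1) d)`.
-/

open MeasureTheory Metric Set

noncomputable section

open Filter Topology
open scoped RealInnerProductSpace

lemma rpow_one_add_sub_one_le {u p : ℝ} (hu : 0 ≤ u) (hp : 1 ≤ p) :
    (1 + u) ^ p - 1 ≤ p * u * (1 + u) ^ (p - 1) := by
  have hu' : 0 < 1 + u := by linarith
  have hpos : 0 < (1 + u) ^ p := by positivity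
  have hbern := one_add_mul_self_le_rpow_one_add (s := -(u / (1 + u)))
    (by linarith [(div_le_one hu').2 (by linarith : u ≤ 1 + u)]) hp
  rw [show 1 + -(u / (1 + u)) = (1 + u)⁻¹ by field_simp; ring, Real.inv_rpow hu'.le] at hbern
  have h := mul_le_mul_of_nonneg_left hbern hpos.le
  rw [mul_inv_cancel₀ hpos.ne'] at h
  rw [Real.rpow_sub_one hu'.ne']
  have e : (1 + u) ^ p * (1 + p * -(u / (1 + u))) =
      (1 + u) ^ p - p * u * ((1 + u) ^ p / (1 + u)) := by
    ring
  linarith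

lemma rpow_one_add_mul_sub_one_le {c r p : ℝ} (hc : 0 ≤ c) (hr : 0 ≤ r) (hp : 1 ≤ p) :
    (1 + c * r) ^ p - 1 ≤ p * c * (1 + c) ^ (p - 1) * (1 + r) ^ p * (r / (1 + r)) := by
  have hr' : 0 < 1 + r := by linarith
  calc (1 + c * r) ^ p - 1 ≤ p * (c * r) * (1 + c * r) ^ (p - 1) :=
        rpow_one_add_sub_one_le (by positivity) hp
    _ ≤ p * (c * r) * ((1 + c) * (1 + r)) ^ (p - 1) := by
        gcongr
        linarith
    _ = p * c * (1 + c) ^ (p - 1) * (1 + r) ^ p * (r / (1 + r)) := by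
        rw [Real.mul_rpow (by linarith) hr'.le, Real.rpow_sub_one hr'.ne']
        ring

lemma MeasureTheory.Measure.addHaar_le_of_subset_ball_union {E : Type*} [NormedAddCommGroup E]
    [NormedSpace ℝ E] [MeasurableSpace E] [BorelSpace E] [FiniteDimensional ℝ E] (μ : Measure E)
    [μ.IsAddHaarMeasure] {A B : Set E} {x : E} {R s l : ℝ} (hA : A ⊆ ball x R ∪ B)
    (hB : ball x s ⊆ B) (hl : 0 < l) (hR : R ≤ l * s) :
    μ A ≤ ENNReal.ofReal (l ^ Module.finrank ℝ E + 1) * μ B :=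
  calc μ A ≤ μ (ball x (l * s)) + μ B :=
        (measure_mono (hA.trans (union_subset_union_left _ (ball_subset_ball hR)))).trans
          (measure_union_le _ _)
    _ = ENNReal.ofReal (l ^ Module.finrank ℝ E) * μ (ball x s) + μ B := by
        rw [Measure.addHaar_ball_mul_of_pos μ x hl, Measure.addHaar_ball_center μ x]
    _ ≤ ENNReal.ofReal (l ^ Module.finrank ℝ E) * μ B + μ B := by gcongr
    _ = ENNReal.ofReal (l ^ Module.finrank ℝ E + 1) * μ B := by
        rw [ENNReal.ofReal_add (by positivity) zero_le_one, add_mul, ENNReal.ofReal_one, one_mul]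

section PathIntegral

variable {E : Type*} [NormedAddCommGroup E] [InnerProductSpace ℝ E]

lemma hasDerivAt_sqrt_sq_add_norm_sub_sq {γ : ℝ → E} {γ' : E} {t : ℝ} (hγ : HasDerivAt γ γ' t)
    (x : E) {ε : ℝ} (hε : ε ≠ 0) :
    HasDerivAt (fun s ↦ √(ε ^ 2 + ‖γ s - x‖ ^ 2)) (⟪γ t - x, γ'⟫ / √(ε ^ 2 + ‖γ t - x‖ ^ 2)) t := by
  convert (((hγ.sub_const x).norm_sq).const_add (ε ^ 2)).sqrt (by positivity) using 1
  field_simp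

lemma continuous_rpow_one_add_dist_mul_norm_deriv {γ : ℝ → E} (hγ : ContDiff ℝ 1 γ) (x : E)
    {a : ℝ} (ha : 0 < a) (p : ℝ) :
    Continuous fun t ↦ (1 + dist x (γ t) / a) ^ p * ‖deriv γ t‖ :=
  ((continuous_const.add ((continuous_const.dist hγ.continuous).div_const a)).rpow_const
    fun _ ↦ Or.inl (add_pos_of_pos_of_nonneg one_pos (by positivity)).ne').mul
    hγ.continuous_deriv_one.norm

/-- `√(ε ^ 2 + ‖γ t - γ 0‖ ^ 2)` stands in for `dist (γ 0) (γ t)`, which fails to be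
differentiable where the path returns to `γ 0`. -/
lemma rpow_one_add_sqrt_sub_le_integral {γ : ℝ → E} (hγ : ContDiff ℝ 1 γ) {a β ε : ℝ}
    (ha : 0 < a) (hβ₀ : 0 ≤ β) (hβ₁ : β ≤ 1) (hε : 0 < ε) :
    (1 + √(ε ^ 2 + ‖γ 1 - γ 0‖ ^ 2) / a) ^ β - (1 + ε / a) ^ β ≤
      ∫ t in (0 : ℝ)..1, β / a * ((1 + dist (γ 0) (γ t) / a) ^ (β - 1) * ‖deriv γ t‖) := by
  set x := γ 0
  set w : ℝ → ℝ := fun s ↦ √(ε ^ 2 + ‖γ s - x‖ ^ 2)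
  have hw_pos (t : ℝ) : 0 < w t := by positivity
  have hw_ge (t : ℝ) : ‖γ t - x‖ ≤ w t :=
    Real.le_sqrt_of_sq_le (by nlinarith)
  have hw0 : w 0 = ε := by simp [w, x, hε.le]
  have hw_cont : Continuous w := by fun_prop
  have hderiv (t : ℝ) := (hasDerivAt_sqrt_sq_add_norm_sub_sq
    ((hγ.differentiable one_ne_zero).differentiableAt.hasDerivAt (x := t)) x hε.ne').div_const a
    |>.const_add 1 |>.rpow_const (p := β) (Or.inl (by have := hw_pos t; positivity))
  suffices key : (1 + w 1 / a) ^ β - (1 + w 0 / a) ^ β ≤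
      ∫ t in (0 : ℝ)..1, β / a * ((1 + dist x (γ t) / a) ^ (β - 1) * ‖deriv γ t‖) by
    rwa [hw0] at key
  refine intervalIntegral.sub_le_integral_of_hasDeriv_right_of_le zero_le_one ?_
    (fun t _ ↦ (hderiv t).hasDerivWithinAt) ?_ (fun t _ ↦ ?_)
  · exact (continuous_const.add (hw_cont.div_const a)).rpow_const
      (fun t ↦ Or.inl (add_pos one_pos (div_pos (hw_pos t) ha)).ne') |>.continuousOn
  · exact (continuous_const.mul
      (continuous_rpow_one_add_dist_mul_norm_deriv hγ x ha (β - 1))).integrableOn_Icc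
  · have hslope : ⟪γ t - x, deriv γ t⟫ / w t ≤ ‖deriv γ t‖ := by
      rw [div_le_iff₀ (hw_pos t)]
      calc ⟪γ t - x, deriv γ t⟫ ≤ ‖γ t - x‖ * ‖deriv γ t‖ := real_inner_le_norm _ _
        _ ≤ ‖deriv γ t‖ * w t := by rw [mul_comm]; gcongr; exact hw_ge t
    have hweight : (1 + w t / a) ^ (β - 1) ≤ (1 + dist x (γ t) / a) ^ (β - 1) :=
      Real.rpow_le_rpow_of_nonpos (by positivity)
        (by rw [dist_comm, dist_eq_norm]; gcongr; exact hw_ge t) (by linarith)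
    calc ⟪γ t - x, deriv γ t⟫ / w t / a * β * (1 + w t / a) ^ (β - 1)
        = β / a * ((1 + w t / a) ^ (β - 1) * (⟪γ t - x, deriv γ t⟫ / w t)) := by ring
      _ ≤ β / a * ((1 + w t / a) ^ (β - 1) * ‖deriv γ t‖) := by gcongr
      _ ≤ β / a * ((1 + dist x (γ t) / a) ^ (β - 1) * ‖deriv γ t‖) := by gcongr

lemma rpow_one_add_dist_sub_one_le_integral {γ : ℝ → E} (hγ : ContDiff ℝ 1 γ) {a β : ℝ}
    (ha : 0 < a) (hβ₀ : 0 ≤ β) (hβ₁ : β ≤ 1) :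
    (1 + dist (γ 0) (γ 1) / a) ^ β - 1 ≤
      β / a * ∫ t in (0 : ℝ)..1, (1 + dist (γ 0) (γ t) / a) ^ (β - 1) * ‖deriv γ t‖ := by
  set D := dist (γ 0) (γ 1) with hD_def
  have hsmoothed (ε : ℝ) (hε : 0 < ε) : (1 + D / a) ^ β - (1 + ε / a) ^ β ≤
      β / a * ∫ t in (0 : ℝ)..1, (1 + dist (γ 0) (γ t) / a) ^ (β - 1) * ‖deriv γ t‖ := by
    have hD : D ≤ √(ε ^ 2 + ‖γ 1 - γ 0‖ ^ 2) :=
      Real.le_sqrt_of_sq_le (by rw [hD_def, dist_comm, dist_eq_norm]; nlinarith)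
    calc (1 + D / a) ^ β - (1 + ε / a) ^ β
        ≤ (1 + √(ε ^ 2 + ‖γ 1 - γ 0‖ ^ 2) / a) ^ β - (1 + ε / a) ^ β := by gcongr
      _ ≤ _ := rpow_one_add_sqrt_sub_le_integral hγ ha hβ₀ hβ₁ hε
      _ = _ := by rw [intervalIntegral.integral_const_mul]
  have hlim : Tendsto (fun ε ↦ (1 + D / a) ^ β - (1 + ε / a) ^ β) (𝓝[>] 0)
      (𝓝 ((1 + D / a) ^ β - 1)) := by
    have : ContinuousAt (fun ε : ℝ ↦ (1 + D / a) ^ β - (1 + ε / a) ^ β) 0 :=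
      continuousAt_const.sub ((continuousAt_const.add (continuousAt_id.div_const a)).rpow_const
        (Or.inl (by simp)))
    simpa using this.tendsto.mono_left nhdsWithin_le_nhds
  exact le_of_tendsto hlim (eventually_nhdsWithin_of_forall hsmoothed)

end PathIntegral

section CriticalRadius

variable {d : ℕ} {ρ : EuclideanSpace ℝ (Fin d) → ℝ} {B₀ k₀ : ℝ}

namespace IsCRF

lemma one_le (hρ : IsCRF ρ B₀ k₀) : 1 ≤ B₀ := by
  have h := (hρ.2 0 0).2
  simp only [dist_self, zero_div, add_zero, Real.one_rpow, mul_one] at h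
  exact (le_mul_iff_one_le_left (hρ.1 0)).1 h

lemma le_mul_of_dist_le (hρ : IsCRF ρ B₀ k₀) (hk₀ : 0 ≤ k₀) {x z : EuclideanSpace ℝ (Fin d)}
    (h : dist x z ≤ ρ x) : ρ x ≤ B₀ * 2 ^ k₀ * ρ z := by
  have hx := hρ.1 x
  have hB₀ : 0 < B₀ := zero_lt_one.trans_le hρ.one_le
  have hratio : dist x z / ρ x ≤ 1 := (div_le_one hx).2 h
  have hlow : B₀⁻¹ * ρ x * 2 ^ (-k₀) ≤ ρ z :=
    calc B₀⁻¹ * ρ x * 2 ^ (-k₀) ≤ B₀⁻¹ * ρ x * (1 + dist x z / ρ x) ^ (-k₀) := by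
          refine mul_le_mul_of_nonneg_left ?_ (by positivity)
          exact Real.rpow_le_rpow_of_nonpos (by positivity) (by linarith) (neg_nonpos.2 hk₀)
      _ ≤ ρ z := (hρ.2 x z).1
  rw [Real.rpow_neg zero_le_two] at hlow
  have h2 : (0 : ℝ) < 2 ^ k₀ := by positivity
  calc ρ x = B₀ * 2 ^ k₀ * (B₀⁻¹ * ρ x * (2 ^ k₀)⁻¹) := by field_simp
    _ ≤ B₀ * 2 ^ k₀ * ρ z := by gcongr

lemma rpow_div_le_inv (hρ : IsCRF ρ B₀ k₀) (hk₀ : 0 ≤ k₀) (x z : EuclideanSpace ℝ (Fin d)) :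
    (1 + dist x z / ρ x) ^ ((k₀ + 1)⁻¹ - 1) / (B₀ * ρ x) ≤ (ρ z)⁻¹ := by
  have hx := hρ.1 x
  have hB₀ : 0 < B₀ := zero_lt_one.trans_le hρ.one_le
  have hexp : (k₀ + 1)⁻¹ - 1 = -(k₀ / (k₀ + 1)) := by field_simp; ring
  rw [hexp, Real.rpow_neg (by positivity), div_eq_mul_inv, ← mul_inv]
  exact inv_anti₀ (hρ.1 z) ((hρ.2 x z).2.trans_eq (by ring))

end IsCRF

section AgmonDist

variable {x y : EuclideanSpace ℝ (Fin d)}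

lemma agmonBall_subset_agmonBall {r r' : ℝ} (h : r ≤ r') : agmonBall ρ x r ⊆ agmonBall ρ x r' :=
  fun _ hy ↦ lt_of_lt_of_le hy h

lemma agmonDist_le_integral (hρ : ∀ z, 0 < ρ z) {γ : ℝ → EuclideanSpace ℝ (Fin d)}
    (hγ : ContDiff ℝ 1 γ) :
    agmonDist ρ (γ 0) (γ 1) ≤ ∫ t in (0 : ℝ)..1, (ρ (γ t))⁻¹ * ‖deriv γ t‖ := by
  refine csInf_le ⟨0, ?_⟩ ⟨γ, hγ, rfl, rfl, rfl⟩
  rintro _ ⟨γ, -, -, -, rfl⟩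
  exact intervalIntegral.integral_nonneg zero_le_one fun t _ ↦
    mul_nonneg (inv_nonneg.2 (hρ (γ t)).le) (norm_nonneg _)

lemma exists_integral_lt_of_agmonDist_lt {s : ℝ} (h : agmonDist ρ x y < s) :
    ∃ γ : ℝ → EuclideanSpace ℝ (Fin d), ContDiff ℝ 1 γ ∧ γ 0 = x ∧ γ 1 = y ∧
      ∫ t in (0 : ℝ)..1, (ρ (γ t))⁻¹ * ‖deriv γ t‖ < s := by
  unfold agmonDist at h
  obtain ⟨_, ⟨γ, hγ, h0, h1, rfl⟩, hlt⟩ := exists_lt_of_csInf_lt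
    (by exact ⟨_, _, AffineMap.contDiff_lineMap x y, by simp, by simp, rfl⟩) h
  exact ⟨γ, hγ, h0, h1, hlt⟩

lemma agmonDist_le_dist_div (hρ : ∀ z, 0 < ρ z) {c : ℝ} (hc : 0 < c)
    (h : ∀ z ∈ segment ℝ x y, c ≤ ρ z) : agmonDist ρ x y ≤ dist x y / c := by
  set γ : ℝ → EuclideanSpace ℝ (Fin d) := ⇑(AffineMap.lineMap (k := ℝ) x y)
  have hbound : ∀ t ∈ uIoc (0 : ℝ) 1, ‖(ρ (γ t))⁻¹ * ‖deriv γ t‖‖ ≤ dist x y / c := by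
    intro t ht
    rw [uIoc_of_le zero_le_one] at ht
    have hρt : c ≤ ρ (γ t) := h _ (lineMap_mem_segment ℝ x y (Ioc_subset_Icc_self ht))
    rw [AffineMap.hasDerivAt_lineMap.deriv, ← dist_eq_norm', norm_mul,
      Real.norm_of_nonneg dist_nonneg, Real.norm_of_nonneg (inv_nonneg.2 (hc.trans_le hρt).le),
      inv_mul_eq_div]
    gcongr
  calc agmonDist ρ x y ≤ ∫ t in (0 : ℝ)..1, (ρ (γ t))⁻¹ * ‖deriv γ t‖ := by
        simpa [γ] using agmonDist_le_integral hρ (AffineMap.contDiff_lineMap x y)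
    _ ≤ dist x y / c * |1 - 0| :=
        (le_abs_self _).trans (intervalIntegral.norm_integral_le_of_norm_le_const hbound)
    _ = dist x y / c := by simp

end AgmonDist

namespace IsCRF

lemma rpow_sub_one_le_integral (hρ : IsCRF ρ B₀ k₀) (hk₀ : 0 ≤ k₀)
    {γ : ℝ → EuclideanSpace ℝ (Fin d)} (hγ : ContDiff ℝ 1 γ)
    (hint : IntervalIntegrable (fun t ↦ (ρ (γ t))⁻¹ * ‖deriv γ t‖) volume 0 1) :
    (1 + dist (γ 0) (γ 1) / ρ (γ 0)) ^ (k₀ + 1)⁻¹ - 1 ≤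
      B₀ / (k₀ + 1) * ∫ t in (0 : ℝ)..1, (ρ (γ t))⁻¹ * ‖deriv γ t‖ := by
  set x := γ 0
  have hx := hρ.1 x
  have hB₀ : 0 < B₀ := zero_lt_one.trans_le hρ.one_le
  have hm : 0 < k₀ + 1 := by linarith
  have hweight : ∫ t in (0 : ℝ)..1, (1 + dist x (γ t) / ρ x) ^ ((k₀ + 1)⁻¹ - 1) * ‖deriv γ t‖ ≤
      B₀ * ρ x * ∫ t in (0 : ℝ)..1, (ρ (γ t))⁻¹ * ‖deriv γ t‖ := by
    rw [← intervalIntegral.integral_const_mul]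
    refine intervalIntegral.integral_mono_on zero_le_one
      ((continuous_rpow_one_add_dist_mul_norm_deriv hγ x hx _).intervalIntegrable 0 1)
      (hint.const_mul _) fun t _ ↦ ?_
    have h := hρ.rpow_div_le_inv hk₀ x (γ t)
    rw [div_le_iff₀ (by positivity)] at h
    calc _ ≤ (ρ (γ t))⁻¹ * (B₀ * ρ x) * ‖deriv γ t‖ := by gcongr
      _ = _ := by ring
  calc _ ≤ (k₀ + 1)⁻¹ / ρ x *
        ∫ t in (0 : ℝ)..1, (1 + dist x (γ t) / ρ x) ^ ((k₀ + 1)⁻¹ - 1) * ‖deriv γ t‖ :=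
        rpow_one_add_dist_sub_one_le_integral hγ hx (by positivity)
          (inv_le_one_of_one_le₀ (by linarith))
    _ ≤ (k₀ + 1)⁻¹ / ρ x * (B₀ * ρ x * ∫ t in (0 : ℝ)..1, (ρ (γ t))⁻¹ * ‖deriv γ t‖) := by
        gcongr
    _ = _ := by field_simp

variable {x : EuclideanSpace ℝ (Fin d)}

lemma ball_subset_agmonBall (hρ : IsCRF ρ B₀ k₀) (hk₀ : 0 ≤ k₀) {s : ℝ} (hs : s ≤ 1) :
    ball x (s * ρ x) ⊆ agmonBall ρ x (B₀ * 2 ^ k₀ * s) := by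
  intro y hy
  rw [mem_ball, dist_comm] at hy
  have hx := hρ.1 x
  have hM : 0 < B₀ * 2 ^ k₀ := by have := hρ.one_le; positivity
  have hnear : ∀ z ∈ segment ℝ x y, ρ x / (B₀ * 2 ^ k₀) ≤ ρ z := fun z hz ↦ by
    have hz' : dist x z ≤ dist x y := by
      simpa [dist_comm] using segment_subset_closedBall_left x y hz
    rw [div_le_iff₀ hM, mul_comm]
    exact hρ.le_mul_of_dist_le hk₀ (by nlinarith)
  calc agmonDist ρ x y ≤ dist x y / (ρ x / (B₀ * 2 ^ k₀)) :=
        agmonDist_le_dist_div hρ.1 (by positivity) hnear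
    _ = B₀ * 2 ^ k₀ * (dist x y / ρ x) := by field_simp
    _ < B₀ * 2 ^ k₀ * s := by gcongr; rwa [div_lt_iff₀ hx]

/-- The exceptional second set accounts for paths whose Agmon integrand is not integrable,
which the definition of `agmonDist` credits with length `0`. -/
lemma agmonBall_subset_ball_union (hρ : IsCRF ρ B₀ k₀) (hk₀ : 0 ≤ k₀) (s : ℝ) {t : ℝ}
    (ht : 0 < t) :
    agmonBall ρ x s ⊆ ball x (((1 + B₀ * s / (k₀ + 1)) ^ (k₀ + 1) - 1) * ρ x) ∪
      agmonBall ρ x t := by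
  intro y hy
  obtain ⟨γ, hγ, rfl, rfl, hlt⟩ := exists_integral_lt_of_agmonDist_lt hy
  by_cases hint : IntervalIntegrable (fun t ↦ (ρ (γ t))⁻¹ * ‖deriv γ t‖) volume 0 1
  · left
    have hx := hρ.1 (γ 0)
    have hm : 0 < k₀ + 1 := by linarith
    have hB₀ : 0 < B₀ := zero_lt_one.trans_le hρ.one_le
    have hroot : (1 + dist (γ 0) (γ 1) / ρ (γ 0)) ^ (k₀ + 1)⁻¹ < 1 + B₀ * s / (k₀ + 1) := by
      have := hρ.rpow_sub_one_le_integral hk₀ hγ hint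
      have : B₀ / (k₀ + 1) * ∫ t in (0 : ℝ)..1, (ρ (γ t))⁻¹ * ‖deriv γ t‖ < B₀ * s / (k₀ + 1) := by
        rw [div_mul_eq_mul_div]; gcongr
      linarith
    rw [Real.rpow_inv_lt_iff_of_pos (by positivity) ((by positivity : (0:ℝ) ≤ _).trans hroot.le) hm]
      at hroot
    rw [mem_ball, dist_comm, ← div_lt_iff₀ hx]
    linarith
  · right
    calc agmonDist ρ (γ 0) (γ 1) ≤ ∫ t in (0 : ℝ)..1, (ρ (γ t))⁻¹ * ‖deriv γ t‖ :=
          agmonDist_le_integral hρ.1 hγ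
      _ = 0 := intervalIntegral.integral_undef hint
      _ < t := ht

end IsCRF

end CriticalRadius

theorem stmt4_general {d : ℕ} (ρ : EuclideanSpace ℝ (Fin d) → ℝ) (B₀ k₀ : ℝ)
    (hk₀ : 1 < k₀) (hρ : IsCRF ρ B₀ k₀) :
    ∃ C : ℝ, 0 < C ∧ ∀ (x : EuclideanSpace ℝ (Fin d)) (r : ℝ), 0 < r →
      volume (agmonBall ρ x (2 * r)) ≤
        ENNReal.ofReal (C * (1 + r) ^ ((k₀ + 1) * d)) * volume (agmonBall ρ x r) := by
  have hB₀ := hρ.one_le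
  have hk₀' : 0 ≤ k₀ := by linarith
  set M := B₀ * 2 ^ k₀
  set c := 2 * B₀ / (k₀ + 1)
  set K := (k₀ + 1) * c * (1 + c) ^ k₀ * M
  have hM : 1 ≤ M := one_le_mul_of_one_le_of_one_le hB₀ (Real.one_le_rpow one_le_two hk₀')
  refine ⟨K ^ d + 1, by positivity, fun x r hr ↦ ?_⟩
  set s := r / (M * (1 + r))
  set l := K * (1 + r) ^ (k₀ + 1)
  have hsmall : ball x (s * ρ x) ⊆ agmonBall ρ x r := by
    refine (hρ.ball_subset_agmonBall hk₀' ?_).trans (agmonBall_subset_agmonBall ?_)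
    · rw [div_le_one (by positivity)]; nlinarith
    · calc B₀ * 2 ^ k₀ * s = r / (1 + r) := by simp only [s, M]; field_simp
        _ ≤ r := div_le_self hr.le (by linarith)
  have hradius : ((1 + B₀ * (2 * r) / (k₀ + 1)) ^ (k₀ + 1) - 1) * ρ x ≤ l * (s * ρ x) := by
    have h := rpow_one_add_mul_sub_one_le (c := c) (by positivity) hr.le (by linarith : 1 ≤ k₀ + 1)
    rw [add_sub_cancel_right, show c * r = B₀ * (2 * r) / (k₀ + 1) by ring] at h
    calc _ ≤ (k₀ + 1) * c * (1 + c) ^ k₀ * (1 + r) ^ (k₀ + 1) * (r / (1 + r)) * ρ x := by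
          gcongr; exact (hρ.1 x).le
      _ = l * (s * ρ x) := by simp only [l, s, K]; field_simp
  have hconst : l ^ d + 1 ≤ (K ^ d + 1) * (1 + r) ^ ((k₀ + 1) * d) := by
    have h1 : 1 ≤ (1 + r) ^ ((k₀ + 1) * d) := Real.one_le_rpow (by linarith) (by positivity)
    rw [mul_pow, ← Real.rpow_mul_natCast (by linarith)]
    nlinarith [pow_nonneg (by positivity : 0 ≤ K) d]
  calc volume (agmonBall ρ x (2 * r)) ≤ ENNReal.ofReal (l ^ d + 1) * volume (agmonBall ρ x r) := by
        simpa only [finrank_euclideanSpace_fin] using Measure.addHaar_le_of_subset_ball_union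
          volume (hρ.agmonBall_subset_ball_union hk₀' (2 * r) hr) hsmall (by positivity) hradius
    _ ≤ _ := by gcongr

theorem stmt4 {d : ℕ} (ρ : EuclideanSpace ℝ (Fin d) → ℝ) (B₀ k₀ : ℝ)
    (hB₀ : 1 < B₀) (hk₀ : 1 < k₀) (hρ : IsCRF ρ B₀ k₀) :
    ∃ C : ℝ, 0 < C ∧ ∀ (x : EuclideanSpace ℝ (Fin d)) (r : ℝ), 0 < r →
      volume (agmonBall ρ x (2 * r)) ≤
        ENNReal.ofReal (C * (1 + r) ^ ((k₀ + 1) * d)) * volume (agmonBall ρ x r) :=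
  stmt4_general ρ B₀ k₀ hk₀ hρ
end
end

section
/- Let ρ be a critical radius function with constants B₀, k₀ and let c₁, c₂, m₁, m₂ > 0 with m₁ > (k₀+1)m₂. Then for all f ∈ L¹_loc(ℝ^d) and x ∈ ℝ^d, the uncentered operator satisfies 𝑀̃_{ρ,c₁}^{m₁,unc} f(x) ≤ C 𝑀̃_{ρ,c₂}^{m₂} f(x), where 𝑀̃_{ρ,c}^{m} f(x) := sup_{t>0} (1/(Φ_{m,c}^ρ(x,t)|B(x,t)|)) ∫_{B(x,t)} |f| and the uncentered version takes the supremum over all Euclidean balls B(x',r) containing x with normalization Φ_{m,c}^ρ(x',r)|B(x',r)|. -/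
open MeasureTheory Metric Set

noncomputable section

open scoped ENNReal

/-- `Φ_{m,c}^ρ(x,r) = exp(c (1 + r/ρ(x))^m)`. -/
def PhiCRF {d : ℕ} (ρ : EuclideanSpace ℝ (Fin d) → ℝ) (m c : ℝ)
    (x : EuclideanSpace ℝ (Fin d)) (r : ℝ) : ℝ :=
  Real.exp (c * (1 + r / ρ x) ^ m)

/-- Centered maximal operator `M̃_{ρ,c}^m` over Euclidean balls with `Φ`-normalisation. -/
def eMax {d : ℕ} (ρ : EuclideanSpace ℝ (Fin d) → ℝ) (c m : ℝ)
    (f : EuclideanSpace ℝ (Fin d) → ℝ) (x : EuclideanSpace ℝ (Fin d)) : ℝ≥0∞ :=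
  ⨆ (t : ℝ) (_ : 0 < t),
    (∫⁻ y in Metric.ball x t, ENNReal.ofReal |f y|) /
      (volume (Metric.ball x t) * ENNReal.ofReal (PhiCRF ρ m c x t))

/-- Uncentered maximal operator `𝑀̃_{ρ,c}^{m,unc}` over Euclidean balls. -/
def eMaxUnc {d : ℕ} (ρ : EuclideanSpace ℝ (Fin d) → ℝ) (c m : ℝ)
    (f : EuclideanSpace ℝ (Fin d) → ℝ) (x : EuclideanSpace ℝ (Fin d)) : ℝ≥0∞ :=
  ⨆ (z : EuclideanSpace ℝ (Fin d)) (r : ℝ) (_ : 0 < r) (_ : x ∈ Metric.ball z r),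
    (∫⁻ y in Metric.ball z r, ENNReal.ofReal |f y|) /
      (volume (Metric.ball z r) * ENNReal.ofReal (PhiCRF ρ m c z r))

/-- A polynomial of smaller degree is dominated by one of larger degree plus a constant. -/
lemma aux_poly (A c₁ a m₁ : ℝ) (hA : 0 < A) (hc : 0 < c₁) (ha : 0 < a) (ham : a < m₁) :
    ∃ K : ℝ, ∀ s : ℝ, 1 ≤ s → A * s ^ a ≤ K + c₁ * s ^ m₁ := by
  set S : ℝ := max 1 ((A / c₁) ^ (m₁ - a)⁻¹) with hS
  have hS1 : (1 : ℝ) ≤ S := le_max_left _ _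
  have hS0 : 0 < S := lt_of_lt_of_le one_pos hS1
  refine ⟨A * S ^ a, fun s hs => ?_⟩
  have hs0 : (0 : ℝ) < s := lt_of_lt_of_le one_pos hs
  rcases le_total s S with h | h
  · have h1 : A * s ^ a ≤ A * S ^ a := by
      have := Real.rpow_le_rpow hs0.le h ha.le
      nlinarith [Real.rpow_pos_of_pos hs0 m₁]
    have h2 : 0 ≤ c₁ * s ^ m₁ := by positivity
    linarith
  · -- S ≤ s : then s^(m₁-a) ≥ A/c₁, so A s^a ≤ c₁ s^m₁
    have hpow : A / c₁ ≤ s ^ (m₁ - a) := by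
      have h1 : (A / c₁) ^ (m₁ - a)⁻¹ ≤ S := le_max_right _ _
      have h2 : ((A / c₁) ^ (m₁ - a)⁻¹) ^ (m₁ - a) ≤ s ^ (m₁ - a) :=
        Real.rpow_le_rpow (Real.rpow_nonneg (by positivity) _) (h1.trans h) (by linarith)
      rwa [Real.rpow_inv_rpow (by positivity) (by linarith)] at h2
    have hsplit : s ^ m₁ = s ^ a * s ^ (m₁ - a) := by
      rw [← Real.rpow_add hs0]; ring_nf
    have hsa : (0 : ℝ) < s ^ a := Real.rpow_pos_of_pos hs0 a
    have : A * s ^ a ≤ c₁ * s ^ m₁ := by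
      rw [hsplit]
      calc A * s ^ a = c₁ * (s ^ a * (A / c₁)) := by field_simp
        _ ≤ c₁ * (s ^ a * s ^ (m₁ - a)) := by
            apply mul_le_mul_of_nonneg_left _ hc.le
            exact mul_le_mul_of_nonneg_left hpow hsa.le
    have hK : 0 ≤ A * S ^ a := by positivity
    linarith

lemma aux_vol {d : ℕ} (x z : EuclideanSpace ℝ (Fin d)) (r : ℝ) (hr : 0 < r) :
    volume (Metric.ball x (2 * r)) ≤ ENNReal.ofReal (2 ^ d) * volume (Metric.ball z r) := by
  cases d with
  | zero =>
      have h2r : (0:ℝ) < 2 * r := by linarith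
      have h1 : Metric.ball x (2 * r) = Set.univ := by
        ext y; simp [Metric.mem_ball, Subsingleton.elim y x, h2r]
      have h2 : Metric.ball z r = Set.univ := by
        ext y; simp [Metric.mem_ball, Subsingleton.elim y z, hr]
      rw [h1, h2]; simp
  | succ k =>
      rw [EuclideanSpace.volume_ball, EuclideanSpace.volume_ball, Fintype.card_fin]
      rw [ENNReal.ofReal_mul (by norm_num), ENNReal.ofReal_pow (by norm_num), mul_pow]
      ring_nf
      exact le_refl _

theorem stmt11 {d : ℕ} (ρ : EuclideanSpace ℝ (Fin d) → ℝ) (B₀ k₀ : ℝ)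
    (hB₀ : 1 < B₀) (hk₀ : 1 < k₀) (hρ : IsCRF ρ B₀ k₀)
    (c₁ c₂ m₁ m₂ : ℝ) (hc₁ : 0 < c₁) (hc₂ : 0 < c₂) (hm₂ : 0 < m₂)
    (hm : (k₀ + 1) * m₂ < m₁) :
    ∃ C : ℝ, 0 < C ∧ ∀ (f : EuclideanSpace ℝ (Fin d) → ℝ) (x : EuclideanSpace ℝ (Fin d)),
      eMaxUnc ρ c₁ m₁ f x ≤ ENNReal.ofReal C * eMax ρ c₂ m₂ f x := by
  obtain ⟨hρpos, hρcrf⟩ := hρ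
  set A : ℝ := c₂ * (2 * B₀) ^ m₂ with hA
  have hApos : 0 < A := by
    have : (0:ℝ) < (2 * B₀) ^ m₂ := Real.rpow_pos_of_pos (by linarith) _
    positivity
  obtain ⟨K, hK⟩ := aux_poly A c₁ ((k₀ + 1) * m₂) m₁ hApos hc₁
    (by positivity) hm
  refine ⟨2 ^ d * Real.exp K, by positivity, fun f x => ?_⟩
  rw [eMaxUnc]
  refine iSup_le fun z => iSup_le fun r => iSup_le fun hr => iSup_le fun hx => ?_
  -- Notation
  have hρz := hρpos z
  have hρx := hρpos x
  set s : ℝ := 1 + r / ρ z with hs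
  have hs1 : (1:ℝ) ≤ s := by
    have : 0 < r / ρ z := by positivity
    simp [hs]; linarith
  have hs0 : (0:ℝ) < s := lt_of_lt_of_le one_pos hs1
  -- Key pointwise estimate: 1 + 2r/ρ x ≤ 2 B₀ s^(k₀+1)
  have hdist : dist z x ≤ r := le_of_lt (by rwa [Metric.mem_ball, dist_comm] at hx)
  have hcrf := (hρcrf z x).1
  have hu1 : (1:ℝ) ≤ 1 + dist z x / ρ z := by
    have : 0 ≤ dist z x / ρ z := by positivity
    linarith
  have hus : 1 + dist z x / ρ z ≤ s := by
    have : dist z x / ρ z ≤ r / ρ z := by gcongr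
    simp only [hs]; linarith
  have hukpos : (0:ℝ) < (1 + dist z x / ρ z) ^ k₀ :=
    Real.rpow_pos_of_pos (by linarith) _
  have hrpow_le : (1 + dist z x / ρ z) ^ k₀ ≤ s ^ k₀ :=
    Real.rpow_le_rpow (by linarith) hus (by linarith)
  have hskpos : (0:ℝ) < s ^ k₀ := Real.rpow_pos_of_pos hs0 _
  have hρx_lb : B₀⁻¹ * ρ z * (s ^ k₀)⁻¹ ≤ ρ x := by
    refine le_trans ?_ hcrf
    rw [Real.rpow_neg (by linarith)]
    have hB0pos : (0:ℝ) < B₀⁻¹ * ρ z := by positivity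
    have : ((1 + dist z x / ρ z) ^ k₀)⁻¹ ≥ (s ^ k₀)⁻¹ :=
      inv_anti₀ hukpos hrpow_le
    nlinarith
  have hρx_lb_pos : (0:ℝ) < B₀⁻¹ * ρ z * (s ^ k₀)⁻¹ := by positivity
  have hkey : 1 + 2 * r / ρ x ≤ 2 * B₀ * s ^ (k₀ + 1) := by
    have h1 : 2 * r / ρ x ≤ 2 * r / (B₀⁻¹ * ρ z * (s ^ k₀)⁻¹) := by
      gcongr
    have h2 : 2 * r / (B₀⁻¹ * ρ z * (s ^ k₀)⁻¹) = 2 * B₀ * (r / ρ z) * s ^ k₀ := by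
      field_simp
    have h3 : s ^ (k₀ + 1) = s ^ k₀ * s := by
      rw [Real.rpow_add_one (ne_of_gt hs0)]
    have hsk1 : (1:ℝ) ≤ s ^ k₀ := Real.one_le_rpow hs1 (by linarith)
    have hrz : 0 < r / ρ z := by positivity
    rw [h3]
    have : 2 * B₀ * (s ^ k₀ * s) = 2 * B₀ * s ^ k₀ + 2 * B₀ * s ^ k₀ * (r / ρ z) := by
      simp only [hs]; ring
    rw [this]
    have hb1 : (1:ℝ) ≤ 2 * B₀ * s ^ k₀ := by nlinarith
    have hb2 : 2 * r / ρ x ≤ 2 * B₀ * s ^ k₀ * (r / ρ z) := by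
      rw [h2] at h1; linarith
    linarith
  -- Phi estimate
  have hx2r : (0:ℝ) ≤ 1 + 2 * r / ρ x := by positivity
  have hPhi : PhiCRF ρ m₂ c₂ x (2 * r) ≤ Real.exp K * PhiCRF ρ m₁ c₁ z r := by
    rw [PhiCRF, PhiCRF, ← Real.exp_add]
    apply Real.exp_le_exp.mpr
    have step1 : c₂ * (1 + 2 * r / ρ x) ^ m₂ ≤ c₂ * (2 * B₀ * s ^ (k₀ + 1)) ^ m₂ :=
      mul_le_mul_of_nonneg_left (Real.rpow_le_rpow hx2r hkey hm₂.le) hc₂.le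
    have step2 : (2 * B₀ * s ^ (k₀ + 1)) ^ m₂ = (2 * B₀) ^ m₂ * s ^ ((k₀ + 1) * m₂) := by
      rw [Real.mul_rpow (by linarith) (Real.rpow_nonneg hs0.le _), Real.rpow_mul hs0.le]
    have step3 : A * s ^ ((k₀ + 1) * m₂) ≤ K + c₁ * s ^ m₁ := hK s hs1
    rw [step2] at step1
    calc c₂ * (1 + 2 * r / ρ x) ^ m₂ ≤ c₂ * ((2 * B₀) ^ m₂ * s ^ ((k₀ + 1) * m₂)) := step1
      _ = A * s ^ ((k₀ + 1) * m₂) := by rw [hA]; ring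
      _ ≤ K + c₁ * s ^ m₁ := step3
  -- ENNReal bookkeeping
  set I : ℝ≥0∞ := ∫⁻ y in Metric.ball z r, ENNReal.ofReal |f y| with hI
  set I' : ℝ≥0∞ := ∫⁻ y in Metric.ball x (2 * r), ENNReal.ofReal |f y| with hI'
  set D : ℝ≥0∞ := volume (Metric.ball z r) * ENNReal.ofReal (PhiCRF ρ m₁ c₁ z r) with hD
  set D' : ℝ≥0∞ := volume (Metric.ball x (2 * r)) * ENNReal.ofReal (PhiCRF ρ m₂ c₂ x (2 * r))
    with hD'
  set E : ℝ≥0∞ := ENNReal.ofReal (2 ^ d * Real.exp K) with hE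
  have hE0 : E ≠ 0 := by
    simp only [hE, ne_eq, ENNReal.ofReal_eq_zero, not_le]
    positivity
  have hEtop : E ≠ ⊤ := ENNReal.ofReal_ne_top
  have hII' : I ≤ I' := by
    apply lintegral_mono_set
    intro y hy
    rw [Metric.mem_ball] at hy ⊢
    calc dist y x ≤ dist y z + dist z x := dist_triangle _ _ _
      _ < r + r := by
          have := Metric.mem_ball.mp hx; rw [dist_comm] at this
          linarith
      _ = 2 * r := by ring
  have hDD' : D' ≤ E * D := by
    rw [hD', hD, hE]
    calc volume (Metric.ball x (2 * r)) * ENNReal.ofReal (PhiCRF ρ m₂ c₂ x (2 * r))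
        ≤ (ENNReal.ofReal (2 ^ d) * volume (Metric.ball z r)) *
            ENNReal.ofReal (Real.exp K * PhiCRF ρ m₁ c₁ z r) := by
          exact mul_le_mul' (aux_vol x z r hr) (ENNReal.ofReal_le_ofReal hPhi)
      _ = ENNReal.ofReal (2 ^ d * Real.exp K) *
            (volume (Metric.ball z r) * ENNReal.ofReal (PhiCRF ρ m₁ c₁ z r)) := by
          rw [ENNReal.ofReal_mul (by positivity), ENNReal.ofReal_mul (by positivity)]
          ring
  have main : I / D ≤ E * (I' / D') := by
    have h1 : I / D = I * E / (D * E) := (ENNReal.mul_div_mul_right I D hE0 hEtop).symm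
    rw [h1]
    have h2 : I * E / (D * E) ≤ I' * E / D' := by
      apply ENNReal.div_le_div (mul_le_mul_left hII' E)
      rw [mul_comm] at hDD'
      exact hDD'
    refine h2.trans (le_of_eq ?_)
    rw [mul_comm I' E, mul_div_assoc]
  refine main.trans ?_
  apply mul_le_mul_right
  rw [eMax]
  exact le_iSup_of_le (2 * r) (le_iSup_of_le (by linarith) le_rfl)
end
end

section
/- The singular kernel of the Riesz transform R_N^{(j)} = ∂_j(-Δ + N)^{-1/2} on ℝ^d (d ≥ 3, N > 0) is K_N^{(j)}(x,y) = -c_N ((x_j - y_j)/|x-y|) e^{-√N |x-y|} s(√N |x-y|), where s(a) := ∫₀^∞ e^{-at}(t + t²/2)^{(d-2)/2} dt + ∫₀^∞ t e^{-at}(t + t²/2)^{(d-2)/2} dt, and the function s satisfies the lower bound s(a) ≥ c a^{-d} for all a > 0 with a dimensional constant c > 0. -/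
open MeasureTheory Set

noncomputable section

/-- The profile function `s(a)` appearing in the Riesz-transform kernel of `-Δ + N`:
`s(a) = ∫₀^∞ e^{-at}(t+t²/2)^{(d-2)/2} dt + ∫₀^∞ t e^{-at}(t+t²/2)^{(d-2)/2} dt`. -/
def sFun (d : ℕ) (a : ℝ) : ℝ :=
  (∫ t in Ioi (0:ℝ), Real.exp (-(a * t)) * (t + t ^ 2 / 2) ^ (((d : ℝ) - 2) / 2)) +
  ∫ t in Ioi (0:ℝ), t * Real.exp (-(a * t)) * (t + t ^ 2 / 2) ^ (((d : ℝ) - 2) / 2)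

/-!
Both integrands of `s(a)` are nonnegative, so it suffices to bound the second one. Dropping
`t` inside `(t + t²/2)^p` gives `t (t + t²/2)^p ≥ 2^{-p} t^{2p+1}`, and the remaining
Gamma integral is `∫₀^∞ t^{2p+1} e^{-at} dt = Γ(2p+2) a^{-(2p+2)}`, with `2p + 2 = d`.
-/

namespace Real

lemma add_rpow_le_two_rpow_mul_rpow_add_rpow {x y p : ℝ} (hx : 0 ≤ x) (hy : 0 ≤ y)
    (hp : 0 ≤ p) : (x + y) ^ p ≤ 2 ^ p * (x ^ p + y ^ p) := calc
  (x + y) ^ p ≤ (2 * max x y) ^ p := by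
    rw [two_mul]; gcongr; exacts [le_max_left _ _, le_max_right _ _]
  _ = 2 ^ p * max x y ^ p := mul_rpow zero_le_two (le_max_of_le_left hx)
  _ ≤ 2 ^ p * (x ^ p + y ^ p) := by
    gcongr
    rcases le_total x y with h | h
    · rw [max_eq_right h]; linarith [rpow_nonneg hx p]
    · rw [max_eq_left h]; linarith [rpow_nonneg hy p]

lemma integrableOn_rpow_mul_exp_neg_mul {s a : ℝ} (hs : -1 < s) (ha : 0 < a) :
    IntegrableOn (fun t : ℝ => t ^ s * exp (-(a * t))) (Ioi 0) := by
  simpa [neg_mul] using integrableOn_rpow_mul_exp_neg_mul_rpow hs one_pos ha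

lemma mul_add_sq_div_two_rpow_le {t p : ℝ} (ht : 0 < t) (hp : 0 ≤ p) :
    t * (t + t ^ 2 / 2) ^ p ≤ 2 ^ p * (t ^ (p + 1) + t ^ (2 * p + 1)) := calc
  t * (t + t ^ 2 / 2) ^ p ≤ t * (2 ^ p * (t ^ p + (t ^ 2) ^ p)) := by
    gcongr
    calc (t + t ^ 2 / 2) ^ p ≤ (t + t ^ 2) ^ p := by gcongr; linarith [sq_nonneg t]
      _ ≤ _ := add_rpow_le_two_rpow_mul_rpow_add_rpow ht.le (sq_nonneg t) hp
  _ = 2 ^ p * (t ^ (p + 1) + t ^ (2 * p + 1)) := by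
    rw [← rpow_natCast, ← rpow_mul ht.le, rpow_add_one ht.ne', rpow_add_one ht.ne']
    push_cast; ring_nf

lemma two_rpow_neg_mul_rpow_le {t p : ℝ} (ht : 0 < t) (hp : 0 ≤ p) :
    2 ^ (-p) * t ^ (2 * p + 1) ≤ t * (t + t ^ 2 / 2) ^ p := calc
  2 ^ (-p) * t ^ (2 * p + 1) = t * (t ^ 2 / 2) ^ p := by
    rw [div_rpow (sq_nonneg t) zero_le_two, ← rpow_natCast, ← rpow_mul ht.le, rpow_neg zero_le_two,
      rpow_add_one ht.ne']
    push_cast; ring_nf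
  _ ≤ t * (t + t ^ 2 / 2) ^ p := by gcongr; linarith

lemma integrableOn_mul_exp_neg_mul_mul_rpow {a p : ℝ} (ha : 0 < a) (hp : 0 ≤ p) :
    IntegrableOn (fun t : ℝ => t * exp (-(a * t)) * (t + t ^ 2 / 2) ^ p) (Ioi 0) := by
  have hdom : IntegrableOn (fun t : ℝ => 2 ^ p *
      (t ^ (p + 1) * exp (-(a * t)) + t ^ (2 * p + 1) * exp (-(a * t)))) (Ioi 0) :=
    ((integrableOn_rpow_mul_exp_neg_mul (by linarith) ha).add
      (integrableOn_rpow_mul_exp_neg_mul (by linarith) ha)).const_mul _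
  have hcont : Continuous (fun t : ℝ => t * exp (-(a * t)) * (t + t ^ 2 / 2) ^ p) := by
    fun_prop (disch := exact Or.inr hp)
  refine hdom.mono' hcont.aestronglyMeasurable.restrict ?_
  rw [ae_restrict_iff' measurableSet_Ioi]
  filter_upwards with t (ht : 0 < t)
  rw [norm_of_nonneg (by positivity)]
  calc t * exp (-(a * t)) * (t + t ^ 2 / 2) ^ p
      = t * (t + t ^ 2 / 2) ^ p * exp (-(a * t)) := by ring
    _ ≤ 2 ^ p * (t ^ (p + 1) + t ^ (2 * p + 1)) * exp (-(a * t)) := by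
      exact mul_le_mul_of_nonneg_right (mul_add_sq_div_two_rpow_le ht hp) (exp_pos _).le
    _ = _ := by ring

theorem two_rpow_neg_mul_Gamma_mul_rpow_le_integral {a p : ℝ} (ha : 0 < a) (hp : 0 ≤ p) :
    2 ^ (-p) * Gamma (2 * p + 2) * a ^ (-(2 * p + 2)) ≤
      ∫ t in Ioi 0, t * exp (-(a * t)) * (t + t ^ 2 / 2) ^ p := calc
  2 ^ (-p) * Gamma (2 * p + 2) * a ^ (-(2 * p + 2))
      = ∫ t in Ioi 0, 2 ^ (-p) * (t ^ (2 * p + 2 - 1) * exp (-(a * t))) := by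
    rw [integral_const_mul, integral_rpow_mul_exp_neg_mul_Ioi (by linarith) ha, one_div,
      inv_rpow ha.le, rpow_neg ha.le]
    ring
  _ ≤ ∫ t in Ioi 0, t * exp (-(a * t)) * (t + t ^ 2 / 2) ^ p := by
    refine setIntegral_mono_on ((integrableOn_rpow_mul_exp_neg_mul (by linarith) ha).const_mul _)
      (integrableOn_mul_exp_neg_mul_mul_rpow ha hp) measurableSet_Ioi fun t (ht : 0 < t) => ?_
    calc 2 ^ (-p) * (t ^ (2 * p + 2 - 1) * exp (-(a * t)))
        = 2 ^ (-p) * t ^ (2 * p + 1) * exp (-(a * t)) := by ring_nf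
      _ ≤ t * (t + t ^ 2 / 2) ^ p * exp (-(a * t)) := by
        exact mul_le_mul_of_nonneg_right (two_rpow_neg_mul_rpow_le ht hp) (exp_pos _).le
      _ = _ := by ring

end Real

/-- Lower bound `s(a) ≥ c a^{-d}` with a dimensional constant `c > 0`. -/
theorem stmt14 (d : ℕ) (hd : 3 ≤ d) :
    ∃ c : ℝ, 0 < c ∧ ∀ a : ℝ, 0 < a → c * a ^ (-(d : ℝ)) ≤ sFun d a := by
  set p : ℝ := ((d : ℝ) - 2) / 2
  have hp : 0 ≤ p := by
    have : (3 : ℝ) ≤ d := by exact_mod_cast hd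
    exact div_nonneg (by linarith) zero_le_two
  have hd_eq : 2 * p + 2 = d := by ring
  refine ⟨2 ^ (-p) * Real.Gamma d, by positivity, fun a ha => ?_⟩
  have hfirst : 0 ≤ ∫ t in Ioi (0:ℝ), Real.exp (-(a * t)) * (t + t ^ 2 / 2) ^ p :=
    setIntegral_nonneg measurableSet_Ioi fun t (ht : 0 < t) => by positivity
  have hsecond := Real.two_rpow_neg_mul_Gamma_mul_rpow_le_integral ha hp
  rw [hd_eq] at hsecond
  unfold sFun
  linarith
end
end
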